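/- Let L be a finite G-lattice with maximum element ⊤. Then the set of join-irreducible elements of the complete lattice coSat(L) of cosaturated transfer systems on L is exactly {⌊x → ⊤⌋ : x ∈ L, x ≠ ⊤}, and the assignment x ↦ ⌊x → ⊤⌋ induces a bijection from the set of G-orbits of L ∖ {⊤} to the set of join-irreducible elements of coSat(L). In particular, the number of join-irreducible elements of coSat(L) equals the number of G-orbits of L minus one. -/

import Mathlib

/-- A transfer system on a `G`-lattice `L`: a partial order refining `≤`,
closed under the `G`-action and under restriction. -/
structure TransferSystem (G L : Type*) [Group G] [Lattice L] [MulAction G L] : Type _ where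
  rel : L → L → Prop
  refl : ∀ x, rel x x
  trans : ∀ {x y z}, rel x y → rel y z → rel x z
  le_of_rel : ∀ {x y}, rel x y → x ≤ y
  smul_rel : ∀ (g : G) {x y}, rel x y → rel (g • x) (g • y)
  restrict : ∀ {x y x'}, rel x y → x' ≤ y → rel (x ⊓ x') x'

namespace TransferSystem

variable {G L : Type*} [Group G] [Lattice L] [MulAction G L]
  [CovariantClass G L (· • ·) (· ≤ ·)]

theorem ext' {S T : TransferSystem G L} (h : S.rel = T.rel) : S = T := by
  cases S; cases T; simpa using h

instance : PartialOrder (TransferSystem G L) where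
  le S T := ∀ ⦃x y : L⦄, S.rel x y → T.rel x y
  le_refl S := fun _ _ h => h
  le_trans S T U h1 h2 := fun _ _ h => h2 (h1 h)
  le_antisymm S T h1 h2 :=
    ext' (by funext x y; exact propext ⟨fun h => h1 h, fun h => h2 h⟩)

lemma smul_mono' (g : G) {x y : L} (h : x ≤ y) : g • x ≤ g • y :=
  CovariantClass.elim g h

/-- The intersection of a set of transfer systems. -/
def sInfTS (s : Set (TransferSystem G L)) : TransferSystem G L where
  rel x y := x ≤ y ∧ ∀ T ∈ s, T.rel x y
  refl x := ⟨le_refl x, fun T _ => T.refl x⟩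
  trans h1 h2 := ⟨h1.1.trans h2.1, fun T hT => T.trans (h1.2 T hT) (h2.2 T hT)⟩
  le_of_rel h := h.1
  smul_rel g _ _ h := ⟨smul_mono' g h.1, fun T hT => T.smul_rel g (h.2 T hT)⟩
  restrict h hle := ⟨inf_le_right, fun T hT => T.restrict (h.2 T hT) hle⟩

instance : InfSet (TransferSystem G L) := ⟨sInfTS⟩

theorem sInf_rel (s : Set (TransferSystem G L)) (x y : L) :
    (sInf s).rel x y ↔ x ≤ y ∧ ∀ T ∈ s, T.rel x y := Iff.rfl

/-- The lattice of transfer systems, ordered by refinement. -/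
instance : CompleteLattice (TransferSystem G L) :=
  completeLatticeOfInf _ (fun s =>
    ⟨fun T hT _ _ h => h.2 T hT,
     fun T hT _ _ h => ((sInf_rel s _ _).2 ⟨T.le_of_rel h, fun S hS => hT hS h⟩)⟩)

/-- `⌊x → y⌋`, the smallest transfer system containing the pair `(x, y)`. -/
def gen (x y : L) : TransferSystem G L := sInf {T : TransferSystem G L | T.rel x y}

end TransferSystem


namespace TransferSystem

variable {G L : Type*} [Group G] [Lattice L] [OrderTop L] [MulAction G L]
  [CovariantClass G L (· • ·) (· ≤ ·)]

/-- A transfer system is cosaturated if it is a join of transfer systems of the form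
`⌊x → ⊤⌋`. -/
def IsCosaturated (T : TransferSystem G L) : Prop :=
  ∃ X : Set L, T = ⨆ x ∈ X, TransferSystem.gen (G := G) x ⊤

/-- Join-irreducibility in the complete lattice `coSat(L)` of cosaturated transfer systems
(whose bottom element and binary joins agree with those of `Tr(L)`). -/
def CoSatSupIrred (T : TransferSystem G L) : Prop :=
  IsCosaturated T ∧ T ≠ ⊥ ∧
    ∀ B C : TransferSystem G L, IsCosaturated B → IsCosaturated C → B ⊔ C = T →
      B = T ∨ C = T

end TransferSystem

/-!
Every nontrivial transfer `u → v` in `⨆ a ∈ A, ⌊a → ⊤⌋` starts below a translate `g • a` of some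
`a ∈ A ∖ {⊤}`, since the pairs `u ≤ v` with this property (together with the identities) already
form a transfer system. So if `⌊x → ⊤⌋ = ⨆ a ∈ A, ⌊a → ⊤⌋` with `x ≠ ⊤`, then `x ≤ g • a` for
some `a ∈ A ∖ {⊤}`, and since `⌊x → ⊤⌋` then contains `a → ⊤`, also `a ≤ h • x`. In a finite
lattice an element lying below one of its own translates is fixed by it, so `x` and `a` lie in one
orbit. This yields
the join-irreducibility of `⌊x → ⊤⌋` and the orbit criterion; conversely a join-irreducible
cosaturated system is a finite join of systems `⌊x → ⊤⌋`, hence equal to one of them, and the count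
drops the orbit `{⊤}`.
-/

section OrderedAction

variable {G L : Type*} [Group G] [PartialOrder L] [MulAction G L]
  [CovariantClass G L (· • ·) (· ≤ ·)]

theorem smul_top_eq_top [OrderTop L] (g : G) : g • (⊤ : L) = ⊤ :=
  top_unique <| by simpa using smul_le_smul_left g (le_top : g⁻¹ • (⊤ : L) ≤ ⊤)

theorem smul_eq_of_le_smul_of_finite [Finite L] {k : G} {y : L} (h : y ≤ k • y) : k • y = y := by
  have hperiod : 0 < MulAction.period k y :=
    Function.minimalPeriod_pos_of_mem_periodicPts ((MulAction.injective k).mem_periodicPts y)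
  refine le_antisymm ?_ h
  calc k • y ≤ k • (k ^ (MulAction.period k y - 1) • y) := smul_le_smul_left k (le_pow_smul h _)
    _ = y := by
      rw [← mul_smul, ← pow_succ', Nat.sub_add_cancel hperiod, MulAction.pow_period_smul]

theorem smul_eq_of_le_smul_of_le_smul [Finite L] {g h : G} {x y : L} (hy : y ≤ g • x)
    (hx : x ≤ h • y) : g • x = y := by
  have hgh : (g * h) • y = y :=
    smul_eq_of_le_smul_of_finite (hy.trans (by rw [mul_smul]; exact smul_le_smul_left g hx))
  refine le_antisymm ?_ hy
  calc g • x ≤ g • h • y := smul_le_smul_left g hx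
    _ = y := by rw [← mul_smul, hgh]

theorem orbitRel_mk_eq_mk_top_iff [OrderTop L] {x : L} :
    Quotient.mk (MulAction.orbitRel G L) x = Quotient.mk _ ⊤ ↔ x = ⊤ := by
  rw [Quotient.eq, MulAction.orbitRel_apply, MulAction.mem_orbit_iff]
  simp only [smul_top_eq_top, exists_const, eq_comm]

end OrderedAction

namespace TransferSystem

variable {G L : Type*} [Group G] [Lattice L] [MulAction G L]
  [CovariantClass G L (· • ·) (· ≤ ·)]

theorem gen_rel {x y : L} (h : x ≤ y) : (gen (G := G) x y).rel x y :=
  (sInf_rel _ _ _).2 ⟨h, fun _ hT => hT⟩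

theorem gen_le {x y : L} {T : TransferSystem G L} (h : T.rel x y) : gen x y ≤ T :=
  sInf_le h

def belowTranslates (A : Set L) : TransferSystem G L where
  rel u v := u ≤ v ∧ (u = v ∨ ∃ a ∈ A, ∃ g : G, u ≤ g • a)
  refl u := ⟨le_rfl, .inl rfl⟩
  trans := by
    rintro u v w ⟨huv, rfl | hu⟩ ⟨hvw, hv⟩
    · exact ⟨hvw, hv⟩
    · exact ⟨huv.trans hvw, .inr hu⟩
  le_of_rel h := h.1
  smul_rel := by
    rintro g u v ⟨huv, rfl | ⟨a, ha, k, hu⟩⟩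
    · exact ⟨le_rfl, .inl rfl⟩
    · refine ⟨smul_le_smul_left g huv, .inr ⟨a, ha, g * k, ?_⟩⟩
      rw [mul_smul]
      exact smul_le_smul_left g hu
  restrict := by
    rintro u v w ⟨huv, rfl | ⟨a, ha, g, hu⟩⟩ hw
    · exact ⟨inf_le_right, .inl (inf_eq_right.2 hw)⟩
    · exact ⟨inf_le_right, .inr ⟨a, ha, g, inf_le_left.trans hu⟩⟩

variable [OrderTop L]

theorem rel_smul_top {T : TransferSystem G L} {x : L} (h : T.rel x ⊤) (g : G) : T.rel (g • x) ⊤ :=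
  smul_top_eq_top (L := L) g ▸ T.smul_rel g h

theorem gen_smul_top (g : G) (x : L) : gen (G := G) (g • x) ⊤ = gen x ⊤ := by
  refine le_antisymm (gen_le (rel_smul_top (gen_rel le_top) g)) (gen_le ?_)
  simpa using rel_smul_top (gen_rel (G := G) (le_top : g • x ≤ ⊤)) g⁻¹

theorem gen_top_top : gen (G := G) (⊤ : L) ⊤ = ⊥ :=
  le_bot_iff.1 (gen_le ((⊥ : TransferSystem G L).refl ⊤))

theorem iSup_gen_top_le_belowTranslates (A : Set L) :
    ⨆ a ∈ A, gen (G := G) a ⊤ ≤ belowTranslates (A \ {⊤}) := by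
  refine iSup₂_le fun a ha => gen_le ⟨le_top, ?_⟩
  by_cases hatop : a = ⊤
  · exact .inl hatop
  · exact .inr ⟨a, ⟨ha, hatop⟩, 1, (one_smul G a).ge⟩

theorem exists_le_smul_of_rel_top {A : Set L} {x : L} (h : (⨆ a ∈ A, gen (G := G) a ⊤).rel x ⊤)
    (hx : x ≠ ⊤) : ∃ a ∈ A, a ≠ ⊤ ∧ ∃ g : G, x ≤ g • a := by
  obtain ⟨-, hxtop | ⟨a, ⟨ha, hatop⟩, g, hxa⟩⟩ := iSup_gen_top_le_belowTranslates A h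
  · exact absurd hxtop hx
  · exact ⟨a, ha, hatop, g, hxa⟩

theorem gen_top_ne_bot {x : L} (hx : x ≠ ⊤) : gen (G := G) x ⊤ ≠ ⊥ := by
  intro h
  have hrel : (⨆ a ∈ (∅ : Set L), gen (G := G) a ⊤).rel x ⊤ := by
    rw [iSup_emptyset, ← h]
    exact gen_rel le_top
  obtain ⟨a, ha, -⟩ := exists_le_smul_of_rel_top hrel hx
  exact ha

theorem exists_smul_eq_of_gen_top_eq_iSup [Finite L] {A : Set L} {x : L} (hx : x ≠ ⊤)
    (h : gen (G := G) x ⊤ = ⨆ a ∈ A, gen a ⊤) : ∃ a ∈ A, ∃ g : G, g • a = x := by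
  obtain ⟨a, ha, hatop, g, hxa⟩ := exists_le_smul_of_rel_top (h ▸ gen_rel le_top) hx
  have hxa' : (⨆ b ∈ ({x} : Set L), gen (G := G) b ⊤).rel a ⊤ := by
    rw [iSup_singleton, h]
    exact le_iSup₂ (f := fun b (_ : b ∈ A) => gen (G := G) b ⊤) a ha (gen_rel le_top)
  obtain ⟨_, rfl, -, k, hax⟩ := exists_le_smul_of_rel_top hxa' hatop
  exact ⟨a, ha, g, smul_eq_of_le_smul_of_le_smul hxa hax⟩

theorem gen_top_eq_gen_top_iff [Finite L] {x y : L} (hx : x ≠ ⊤) :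
    gen (G := G) x ⊤ = gen y ⊤ ↔ ∃ g : G, g • x = y := by
  refine ⟨fun h => ?_, fun ⟨g, hg⟩ => hg ▸ (gen_smul_top g x).symm⟩
  have hy : y ≠ ⊤ := by
    rintro rfl
    exact gen_top_ne_bot hx (h.trans gen_top_top)
  obtain ⟨_, rfl, g, hg⟩ :=
    exists_smul_eq_of_gen_top_eq_iSup (G := G) (A := {x}) hy (by rw [iSup_singleton, h])
  exact ⟨g, hg⟩

theorem isCosaturated_gen_top (x : L) : IsCosaturated (gen (G := G) x ⊤) :=
  ⟨{x}, by rw [iSup_singleton]⟩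

theorem coSatSupIrred_gen_top [Finite L] {x : L} (hx : x ≠ ⊤) :
    CoSatSupIrred (gen (G := G) x ⊤) := by
  refine ⟨isCosaturated_gen_top x, gen_top_ne_bot hx, ?_⟩
  rintro _ _ ⟨B, rfl⟩ ⟨C, rfl⟩ hBC
  obtain ⟨a, ha, g, rfl⟩ := exists_smul_eq_of_gen_top_eq_iSup hx (iSup_union.trans hBC).symm
  rw [gen_smul_top] at hBC ⊢
  rcases ha with ha | ha
  · exact .inl (le_antisymm (hBC ▸ le_sup_left) (le_iSup₂_of_le a ha le_rfl))
  · exact .inr (le_antisymm (hBC ▸ le_sup_right) (le_iSup₂_of_le a ha le_rfl))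

theorem exists_eq_gen_top_of_coSatSupIrred [Finite L] {T : TransferSystem G L}
    (hT : CoSatSupIrred T) : ∃ x : L, x ≠ ⊤ ∧ T = gen x ⊤ := by
  obtain ⟨⟨X, hX⟩, hbot, hirred⟩ := hT
  suffices ∃ x ∈ X, T = gen x ⊤ by
    obtain ⟨x, -, rfl⟩ := this
    exact ⟨x, fun h => hbot (by rw [h, gen_top_top]), rfl⟩
  induction X, X.toFinite using Set.Finite.induction_on with
  | empty => exact absurd (hX.trans iSup_emptyset) hbot
  | @insert a s _ _ ih =>
    rw [iSup_insert] at hX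
    rcases hirred _ _ (isCosaturated_gen_top a) ⟨s, rfl⟩ hX.symm with h | h
    · exact ⟨a, Set.mem_insert a s, h.symm⟩
    · obtain ⟨x, hx, hTx⟩ := ih h.symm
      exact ⟨x, Set.mem_insert_of_mem a hx, hTx⟩

theorem setOf_coSatSupIrred_eq [Finite L] :
    {T : TransferSystem G L | CoSatSupIrred T} = {T | ∃ x : L, x ≠ ⊤ ∧ T = gen x ⊤} :=
  Set.ext fun _ =>
    ⟨exists_eq_gen_top_of_coSatSupIrred, fun ⟨_, hx, hT⟩ => hT ▸ coSatSupIrred_gen_top hx⟩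

open MulAction

def genTopOfOrbit : orbitRel.Quotient G L → TransferSystem G L :=
  Quotient.lift (fun x => gen x ⊤) fun _ _ ⟨g, hg⟩ => by rw [← hg, gen_smul_top]

theorem card_coSatSupIrred [Finite L] :
    Nat.card {T : TransferSystem G L // CoSatSupIrred T} = Nat.card (orbitRel.Quotient G L) - 1 := by
  have himage : {T | CoSatSupIrred T} = genTopOfOrbit '' {Quotient.mk (orbitRel G L) ⊤}ᶜ := by
    rw [setOf_coSatSupIrred_eq]
    ext T
    constructor
    · rintro ⟨x, hx, rfl⟩
      exact ⟨Quotient.mk _ x, orbitRel_mk_eq_mk_top_iff.not.2 hx, rfl⟩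
    · rintro ⟨⟨x⟩, hx, rfl⟩
      exact ⟨x, orbitRel_mk_eq_mk_top_iff.not.1 hx, rfl⟩
  have hinj : Set.InjOn genTopOfOrbit {Quotient.mk (orbitRel G L) ⊤}ᶜ := by
    rintro ⟨x⟩ hx ⟨y⟩ - h
    obtain ⟨g, rfl⟩ := (gen_top_eq_gen_top_iff (orbitRel_mk_eq_mk_top_iff.not.1 hx)).1 h
    exact Quotient.sound (s := orbitRel G L) ⟨g⁻¹, inv_smul_smul g x⟩
  rw [← Set.coe_ofPred, himage, Nat.card_image_of_injOn hinj, Nat.card_coe_set_eq, Set.ncard_compl,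
    Set.ncard_singleton]

end TransferSystem

theorem coSat_supIrred_characterization_general {G L : Type*} [Group G] [Lattice L]
    [OrderTop L] [Finite L] [MulAction G L] [CovariantClass G L (· • ·) (· ≤ ·)] :
    ({T : TransferSystem G L | TransferSystem.CoSatSupIrred T} =
        {T : TransferSystem G L | ∃ x : L, x ≠ ⊤ ∧ T = TransferSystem.gen x ⊤}) ∧
    (∀ x y : L, x ≠ ⊤ → y ≠ ⊤ →
      (TransferSystem.gen (G := G) x ⊤ = TransferSystem.gen (G := G) y ⊤ ↔
        ∃ g : G, g • x = y)) ∧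
    Nat.card {T : TransferSystem G L // TransferSystem.CoSatSupIrred T} =
      Nat.card (Quotient (MulAction.orbitRel G L)) - 1 :=
  ⟨TransferSystem.setOf_coSatSupIrred_eq, fun _ _ hx _ => TransferSystem.gen_top_eq_gen_top_iff hx,
    TransferSystem.card_coSatSupIrred⟩

/-- The join-irreducible elements of `coSat(L)` are exactly the
`⌊x → ⊤⌋` with `x ≠ ⊤`; the assignment `x ↦ ⌊x → ⊤⌋` induces a bijection from the
`G`-orbits of `L ∖ {⊤}` to the join-irreducibles of `coSat(L)`; in particular their number
equals the number of `G`-orbits of `L` minus one. -/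
theorem coSat_supIrred_characterization {G L : Type*} [Group G] [Finite G] [Lattice L]
    [OrderTop L] [Finite L] [MulAction G L] [CovariantClass G L (· • ·) (· ≤ ·)] :
    ({T : TransferSystem G L | TransferSystem.CoSatSupIrred T} =
        {T : TransferSystem G L | ∃ x : L, x ≠ ⊤ ∧ T = TransferSystem.gen x ⊤}) ∧
    (∀ x y : L, x ≠ ⊤ → y ≠ ⊤ →
      (TransferSystem.gen (G := G) x ⊤ = TransferSystem.gen (G := G) y ⊤ ↔
        ∃ g : G, g • x = y)) ∧
    Nat.card {T : TransferSystem G L // TransferSystem.CoSatSupIrred T} =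
      Nat.card (Quotient (MulAction.orbitRel G L)) - 1 :=
  coSat_supIrred_characterization_general
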